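/- arXiv:2310.10370 — 3 statements merged into one kernel-verified Lean document; each statement's English description precedes it below -/
import Mathlib

section
/- Let H be a Hilbert space, T and S unitary operators on H, J a bounded operator on H with T∘J = J∘S, and (n_j) a sequence of natural numbers such that T^{n_j} converges to the identity in the weak operator topology and S^{n_j} converges to 0 in the weak operator topology. Then J = 0. -/
open Filter Topology

namespace ContinuousLinearMap

variable {𝕜 E F ι : Type*} [RCLike 𝕜]
  [NormedAddCommGroup E] [InnerProductSpace 𝕜 E] [CompleteSpace E]
  [NormedAddCommGroup F] [InnerProductSpace 𝕜 F] [CompleteSpace F]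

theorem tendsto_inner_apply_comp_of_tendsto_inner_zero {l : Filter ι} {B : ι → E →L[𝕜] E}
    (hB : ∀ x y : E, Tendsto (fun i => inner 𝕜 (B i x) y) l (𝓝 0)) (J : E →L[𝕜] F)
    (x : E) (y : F) : Tendsto (fun i => inner 𝕜 (J (B i x)) y) l (𝓝 0) := by
  simpa only [adjoint_inner_right] using hB x (adjoint J y)

/-- Comparing the two weak limits of `⟪A i (J x), y⟫ = ⟪J (B i x), y⟫` gives `⟪J x, y⟫ = 0`. -/
theorem eq_zero_of_comp_eq_comp_of_tendsto_inner {l : Filter ι} [l.NeBot]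
    {A : ι → F →L[𝕜] F} {B : ι → E →L[𝕜] E} {J : E →L[𝕜] F}
    (hAB : ∀ i, A i ∘L J = J ∘L B i)
    (hA : ∀ x y : F, Tendsto (fun i => inner 𝕜 (A i x) y) l (𝓝 (inner 𝕜 x y)))
    (hB : ∀ x y : E, Tendsto (fun i => inner 𝕜 (B i x) y) l (𝓝 0)) :
    J = 0 := by
  ext x
  refine ext_inner_right 𝕜 fun y => ?_
  have hJB := tendsto_inner_apply_comp_of_tendsto_inner_zero hB J x y
  simp only [← comp_apply, ← hAB] at hJB
  simpa using tendsto_nhds_unique (hA (J x) y) hJB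

end ContinuousLinearMap

theorem stmt_0 {H : Type*} [NormedAddCommGroup H] [InnerProductSpace ℂ H] [CompleteSpace H]
    (T S : unitary (H →L[ℂ] H)) (J : H →L[ℂ] H)
    (hJ : (T : H →L[ℂ] H) ∘L J = J ∘L (S : H →L[ℂ] H))
    (n : ℕ → ℕ)
    (hT : ∀ x y : H, Tendsto (fun j => @inner ℂ _ _ (((T ^ (n j) : unitary (H →L[ℂ] H)) : H →L[ℂ] H) x) y) atTop (𝓝 (@inner ℂ _ _ x y)))
    (hS : ∀ x y : H, Tendsto (fun j => @inner ℂ _ _ (((S ^ (n j) : unitary (H →L[ℂ] H)) : H →L[ℂ] H) x) y) atTop (𝓝 0)) :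
    J = 0 := by
  refine ContinuousLinearMap.eq_zero_of_comp_eq_comp_of_tendsto_inner (fun j => ?_) hT hS
  rw [SubmonoidClass.coe_pow, SubmonoidClass.coe_pow]
  exact (SemiconjBy.pow_right hJ.symm (n j)).symm
end

section
/- Let S be an invertible measure-preserving transformation of a σ-finite measure space (X, μ) and let W be a wandering set for S (the sets S^i W, i ∈ ℤ, are pairwise disjoint) such that X = ⋃_{i ∈ ℤ} S^i W up to null sets. Then for every measurable set Y with μ(Y) < ∞, limsup_{N→∞} μ(S^{N+1} Y \ ⋃_{i=1}^{N} S^i Y) ≤ μ(W). -/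
open Filter MeasureTheory

/-!
Pulling back by `S ^ (N + 1)`, the `N`-th set under the limsup has the measure of the set of
points of `Y` that do not return to `Y` within `N` steps. These sets decrease to the set `A` of
points of `Y` that never return, so by continuity from above (`μ Y < ∞`) the limsup is `μ A`.
No point of `A` ever returns to `A`, so the translates of `A` are pairwise disjoint; as the
translates of `W` cover `X` a.e., `μ A ≤ ∑ i, μ (A ∩ S^i W) = ∑ i, μ (S^(-i) A ∩ W) ≤ μ W`.
-/

namespace Equiv.Perm

variable {X : Type*} {S : Perm X}

lemma image_zpow_image_zpow (a b : ℤ) (Z : Set X) :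
    ⇑(S ^ a) '' (⇑(S ^ b) '' Z) = ⇑(S ^ (a + b)) '' Z := by
  rw [Set.image_image, zpow_add, coe_mul]
  rfl

variable [MeasurableSpace X] {μ : Measure X}

lemma measurePreserving_pow (hS : MeasurePreserving S μ μ) (n : ℕ) :
    MeasurePreserving ⇑(S ^ n) μ μ := by
  rw [← iterate_eq_pow]
  exact hS.iterate n

lemma measurePreserving_pow_symm (hS' : MeasurePreserving S.symm μ μ) (n : ℕ) :
    MeasurePreserving ⇑(S ^ n).symm μ μ := by
  rw [← inv_def, ← inv_pow]
  exact measurePreserving_pow hS' n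

lemma measurePreserving_zpow (hS : MeasurePreserving S μ μ)
    (hS' : MeasurePreserving S.symm μ μ) (k : ℤ) : MeasurePreserving ⇑(S ^ k) μ μ := by
  obtain ⟨n, rfl | rfl⟩ := k.eq_nat_or_neg
  · simpa using measurePreserving_pow hS n
  · rw [zpow_neg, zpow_natCast, ← inv_pow]
    exact measurePreserving_pow hS' n

lemma measurePreserving_zpow_symm (hS : MeasurePreserving S μ μ)
    (hS' : MeasurePreserving S.symm μ μ) (k : ℤ) : MeasurePreserving ⇑(S ^ k).symm μ μ := by
  rw [← inv_def, ← zpow_neg]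
  exact measurePreserving_zpow hS hS' (-k)

lemma measurableSet_image_of_measurable_symm {Z : Set X} (hS' : Measurable S.symm)
    (hZ : MeasurableSet Z) : MeasurableSet (S '' Z) := by
  rw [S.image_eq_preimage_symm]
  exact hS' hZ

lemma measure_image_of_measurePreserving_symm {Z : Set X} (hS' : MeasurePreserving S.symm μ μ)
    (hZ : MeasurableSet Z) : μ (S '' Z) = μ Z := by
  rw [S.image_eq_preimage_symm]
  exact hS'.measure_preimage hZ.nullMeasurableSet

end Equiv.Perm

section

variable {X : Type*} {S : Equiv.Perm X}

lemma pairwise_disjoint_zpow_image_of_pow_apply_notMem {A : Set X}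
    (h : ∀ n : ℕ, 0 < n → ∀ a ∈ A, (S ^ n) a ∉ A) :
    Pairwise (Function.onFun Disjoint fun i : ℤ => ⇑(S ^ i) '' A) := by
  rw [pairwise_disjoint_on]
  intro m n hmn
  obtain ⟨k, rfl⟩ := Int.le.dest hmn.le
  rw [Set.disjoint_left]
  rintro _ ⟨a, ha, rfl⟩ ⟨b, hb, hba⟩
  rw [zpow_add, zpow_natCast, Equiv.Perm.mul_apply] at hba
  exact h k (by omega) b hb ((S ^ m).injective hba ▸ ha)

def nonReturnSet (S : Equiv.Perm X) (Y : Set X) (N : ℕ) : Set X :=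
  {y ∈ Y | ∀ j ∈ Finset.Icc 1 N, (S ^ j) y ∉ Y}

lemma nonReturnSet_antitone {Y : Set X} : Antitone (nonReturnSet S Y) :=
  fun _ _ hmn _ ⟨hy, hret⟩ =>
    ⟨hy, fun j hj => hret j (by simp only [Finset.mem_Icc] at hj ⊢; omega)⟩

lemma pow_apply_notMem_iInter_nonReturnSet {Y : Set X} {n : ℕ} (hn : 0 < n) {a : X}
    (ha : a ∈ ⋂ N, nonReturnSet S Y N) : (S ^ n) a ∉ ⋂ N, nonReturnSet S Y N := fun hna =>
  (Set.mem_iInter.1 ha n).2 n (by simp only [Finset.mem_Icc]; omega) (Set.mem_iInter.1 hna 0).1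

lemma image_pow_nonReturnSet (Y : Set X) (N : ℕ) :
    ⇑(S ^ (N + 1)) '' nonReturnSet S Y N =
      ⇑(S ^ (N + 1)) '' Y \ ⋃ i ∈ Finset.Icc 1 N, ⇑(S ^ i) '' Y := by
  have hpow {k i : ℕ} (h : k + i = N + 1) (y : X) : (S ^ k) ((S ^ i) y) = (S ^ (N + 1)) y := by
    rw [← Equiv.Perm.mul_apply, ← pow_add, h]
  ext x
  simp only [Set.mem_sdiff, Set.mem_iUnion, Finset.mem_Icc, exists_prop]
  constructor
  · rintro ⟨y, ⟨hy, hret⟩, rfl⟩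
    refine ⟨⟨y, hy, rfl⟩, ?_⟩
    rintro ⟨i, hi, z, hz, hzy⟩
    refine hret (N + 1 - i) (by simp only [Finset.mem_Icc]; omega) ?_
    rwa [(S ^ i).injective ((hpow (by omega) y).trans hzy.symm)]
  · rintro ⟨⟨y, hy, rfl⟩, hx⟩
    refine ⟨y, ⟨hy, fun j hj hjy => hx ⟨N + 1 - j, ?_, (S ^ j) y, hjy, hpow ?_ y⟩⟩, rfl⟩ <;>
      simp only [Finset.mem_Icc] at hj <;> omega

variable [MeasurableSpace X] {μ : Measure X}

lemma measurableSet_nonReturnSet (hS : Measurable S) {Y : Set X} (hY : MeasurableSet Y)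
    (N : ℕ) : MeasurableSet (nonReturnSet S Y N) := by
  have : nonReturnSet S Y N = Y ∩ ⋂ j ∈ Finset.Icc 1 N, ⇑(S ^ j) ⁻¹' Yᶜ := by
    ext; simp [nonReturnSet]
  rw [this]
  refine hY.inter (.biInter (Finset.countable_toSet _) fun j _ => ?_)
  rw [← Equiv.Perm.iterate_eq_pow]
  exact hY.compl.preimage (hS.iterate j)

lemma measure_image_pow_sdiff_biUnion (hS : Measurable S) (hS' : MeasurePreserving S.symm μ μ)
    {Y : Set X} (hY : MeasurableSet Y) (N : ℕ) :
    μ (⇑(S ^ (N + 1)) '' Y \ ⋃ i ∈ Finset.Icc 1 N, ⇑(S ^ i) '' Y) = μ (nonReturnSet S Y N) := by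
  rw [← image_pow_nonReturnSet, Equiv.Perm.measure_image_of_measurePreserving_symm
    (Equiv.Perm.measurePreserving_pow_symm hS' (N + 1)) (measurableSet_nonReturnSet hS hY N)]

lemma measure_le_of_pairwise_disjoint_zpow_image {A W : Set X} (hS : MeasurePreserving S μ μ)
    (hS' : MeasurePreserving S.symm μ μ) (hA : MeasurableSet A) (hW : MeasurableSet W)
    (hAw : Pairwise (Function.onFun Disjoint fun i : ℤ => ⇑(S ^ i) '' A))
    (hcover : μ (⋃ i : ℤ, ⇑(S ^ i) '' W)ᶜ = 0) : μ A ≤ μ W := by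
  have hmeas (i : ℤ) {Z : Set X} (hZ : MeasurableSet Z) : MeasurableSet (⇑(S ^ i) '' Z) :=
    Equiv.Perm.measurableSet_image_of_measurable_symm
      (Equiv.Perm.measurePreserving_zpow_symm hS hS' i).measurable hZ
  have hpiece (i : ℤ) : μ (A ∩ ⇑(S ^ i) '' W) = μ (⇑(S ^ (-i)) '' A ∩ W) := by
    rw [← Equiv.Perm.measure_image_of_measurePreserving_symm
      (Equiv.Perm.measurePreserving_zpow_symm hS hS' (-i)) (hA.inter (hmeas i hW)),
      Set.image_inter (S ^ (-i)).injective, Equiv.Perm.image_zpow_image_zpow, neg_add_cancel,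
      zpow_zero, Equiv.Perm.coe_one, Set.image_id]
  calc μ A = μ (⋃ i : ℤ, A ∩ ⇑(S ^ i) '' W) := by
        rw [← Set.inter_iUnion, measure_inter_conull hcover]
    _ ≤ ∑' i : ℤ, μ (A ∩ ⇑(S ^ i) '' W) := measure_iUnion_le _
    _ = ∑' i : ℤ, μ (⇑(S ^ (-i)) '' A ∩ W) := tsum_congr hpiece
    _ = μ (⋃ i : ℤ, ⇑(S ^ (-i)) '' A ∩ W) :=
        (measure_iUnion (fun i k hik => (hAw (neg_injective.ne hik)).mono Set.inter_subset_left
          Set.inter_subset_left) fun i => (hmeas (-i) hA).inter hW).symm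
    _ ≤ μ W := measure_mono (Set.iUnion_subset fun _ => Set.inter_subset_right)

end

theorem stmt_14_general {X : Type*} [MeasurableSpace X] (μ : Measure X)
    (S : Equiv.Perm X) (hS : MeasurePreserving S μ μ) (hS' : MeasurePreserving S.symm μ μ)
    (W : Set X) (hW : MeasurableSet W)
    (hcover : μ ((⋃ i : ℤ, (S ^ i : Equiv.Perm X) '' W)ᶜ) = 0)
    (Y : Set X) (hY : MeasurableSet Y) (hYfin : μ Y < ⊤) :
    Filter.limsup (fun N : ℕ =>
        μ ((S ^ (N + 1) : Equiv.Perm X) '' Y \ ⋃ i ∈ Finset.Icc 1 N, (S ^ i : Equiv.Perm X) '' Y))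
      atTop ≤ μ W := by
  have hE := measurableSet_nonReturnSet hS.measurable hY
  have hlim := tendsto_measure_iInter_atTop (fun N => (hE N).nullMeasurableSet)
    nonReturnSet_antitone ⟨0, ((measure_mono (Set.sep_subset _ _)).trans_lt hYfin).ne⟩
  simp_rw [measure_image_pow_sdiff_biUnion hS.measurable hS' hY]
  exact hlim.limsup_eq.trans_le <| measure_le_of_pairwise_disjoint_zpow_image hS hS' (.iInter hE)
    hW (pairwise_disjoint_zpow_image_of_pow_apply_notMem fun _ hn _ =>
      pow_apply_notMem_iInter_nonReturnSet hn) hcover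

theorem stmt_14 {X : Type*} [MeasurableSpace X] (μ : Measure X) [SigmaFinite μ]
    (S : Equiv.Perm X) (hS : MeasurePreserving S μ μ) (hS' : MeasurePreserving S.symm μ μ)
    (W : Set X) (hW : MeasurableSet W)
    (hwand : Pairwise (Function.onFun Disjoint fun i : ℤ => (S ^ i : Equiv.Perm X) '' W))
    (hcover : μ ((⋃ i : ℤ, (S ^ i : Equiv.Perm X) '' W)ᶜ) = 0)
    (Y : Set X) (hY : MeasurableSet Y) (hYfin : μ Y < ⊤) :
    Filter.limsup (fun N : ℕ =>
        μ ((S ^ (N + 1) : Equiv.Perm X) '' Y \ ⋃ i ∈ Finset.Icc 1 N, (S ^ i : Equiv.Perm X) '' Y))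
      atTop ≤ μ W :=
  stmt_14_general μ S hS hS' W hW hcover Y hY hYfin
end

section
/- Let μ be a finite measure on the unit circle 𝕋 that is absolutely continuous with respect to Lebesgue measure λ and nonzero. For p ≥ 1 let μ_p be the pushforward of μ under the map z ↦ z^p. Then λ({z : dμ_p/dλ (z) > 0}) → λ(𝕋) as p → ∞; consequently, for all sufficiently large p, μ_p is not mutually singular with μ. -/
/-!
Let `E` be the set where `dμ/dλ > 0`; it has positive measure, so it has a Lebesgue density
point `x`. The set `D = (n • ·)⁻¹' {dμₙ/dλ > 0}` is invariant under rotation by `1/n`, hence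
`λ {dμₙ/dλ > 0} = λ D = n · λ (D ∩ I)` for the arc `I` of length `1/n` centred at `x`. Since `μ`
charges no part of `Dᶜ`, `E ⊆ D` up to a null set, so `λ {dμₙ/dλ > 0} ≥ λ (E ∩ I) / λ I → 1`.
Finally, if `μₙ ⟂ μ` then the positivity sets of the two densities are essentially disjoint,
which is impossible once `λ {dμₙ/dλ > 0} > 1 - λ E`.
-/

open Filter Topology MeasureTheory Metric Set
open scoped Pointwise

namespace MeasureTheory.Measure

variable {α : Type*} {mα : MeasurableSpace α}

lemma measure_rnDeriv_pos_inter_eq_zero {ν μ : Measure α} [ν.HaveLebesgueDecomposition μ]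
    {s : Set α} (hs : MeasurableSet s) (hνs : ν s = 0) :
    μ ({x | 0 < ν.rnDeriv μ x} ∩ s) = 0 := by
  have hint : ∫⁻ x in s, ν.rnDeriv μ x ∂μ = 0 :=
    nonpos_iff_eq_zero.mp (hνs ▸ setLIntegral_rnDeriv_le s)
  have hzero : ∀ᵐ x ∂μ, x ∈ s → ν.rnDeriv μ x = 0 :=
    (ae_restrict_iff' hs).mp ((lintegral_eq_zero_iff (measurable_rnDeriv ν μ)).mp hint)
  rw [measure_eq_zero_iff_ae_notMem]
  filter_upwards [hzero] with x hx ⟨hpos, hxs⟩ using hpos.ne' (hx hxs)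

lemma measure_rnDeriv_pos_ne_zero {ν μ : Measure α} [ν.HaveLebesgueDecomposition μ]
    (hνμ : ν ≪ μ) (hν : ν ≠ 0) : μ {x | 0 < ν.rnDeriv μ x} ≠ 0 := by
  intro h
  apply hν
  rw [← measure_univ_eq_zero, ← union_compl_self {x | 0 < ν.rnDeriv μ x}]
  exact measure_union_null (hνμ h) (ae_iff.mp (rnDeriv_pos hνμ))

lemma measure_rnDeriv_pos_add_le_of_mutuallySingular {ν₁ ν₂ μ : Measure α}
    [ν₁.HaveLebesgueDecomposition μ] [ν₂.HaveLebesgueDecomposition μ] (h : ν₁ ⟂ₘ ν₂) :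
    μ {x | 0 < ν₁.rnDeriv μ x} + μ {x | 0 < ν₂.rnDeriv μ x} ≤ μ univ := by
  obtain ⟨S, hS, hν₁S, hν₂S⟩ := h
  calc μ {x | 0 < ν₁.rnDeriv μ x} + μ {x | 0 < ν₂.rnDeriv μ x}
      = μ ({x | 0 < ν₁.rnDeriv μ x} \ S) + μ ({x | 0 < ν₂.rnDeriv μ x} \ Sᶜ) := by
        rw [measure_sdiff_null' (measure_rnDeriv_pos_inter_eq_zero hS hν₁S),
          measure_sdiff_null' (measure_rnDeriv_pos_inter_eq_zero hS.compl hν₂S)]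
    _ ≤ μ Sᶜ + μ S := by
        gcongr
        · exact sdiff_subset_compl _ _
        · exact fun x hx => by simpa using hx.2
    _ = μ univ := by rw [add_comm, measure_add_measure_compl hS]

lemma measure_rnDeriv_pos_diff_preimage_rnDeriv_map_pos {β : Type*} {mβ : MeasurableSpace β}
    {ρ μ : Measure α} {ν : Measure β} {f : α → β} [ρ.HaveLebesgueDecomposition μ]
    [(ρ.map f).HaveLebesgueDecomposition ν] (hf : Measurable f) (hρf : ρ.map f ≪ ν) :
    μ ({x | 0 < ρ.rnDeriv μ x} \ f ⁻¹' {y | 0 < (ρ.map f).rnDeriv ν y}) = 0 := by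
  have hP : MeasurableSet {y | 0 < (ρ.map f).rnDeriv ν y} :=
    measurableSet_lt measurable_const (measurable_rnDeriv _ _)
  have hρP : ρ (f ⁻¹' {y | 0 < (ρ.map f).rnDeriv ν y}ᶜ) = 0 := by
    rw [← map_apply hf hP.compl]
    exact ae_iff.mp (rnDeriv_pos hρf)
  exact measure_rnDeriv_pos_inter_eq_zero (hf hP).compl hρP

end MeasureTheory.Measure

lemma exists_tendsto_measure_inter_closedBall_div {α : Type*} [PseudoMetricSpace α]
    [MeasurableSpace α] [SecondCountableTopology α] [BorelSpace α] (μ : Measure α)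
    [IsLocallyFiniteMeasure μ] [IsUnifLocDoublingMeasure μ] {s : Set α} (hs : μ s ≠ 0) :
    ∃ x, Tendsto (fun r => μ (s ∩ closedBall x r) / μ (closedBall x r)) (𝓝[>] 0) (𝓝 1) := by
  obtain ⟨x, -, hx⟩ := Measure.exists_mem_of_measure_ne_zero_of_ae hs
    (IsUnifLocDoublingMeasure.ae_tendsto_measure_inter_div μ s 1)
  refine ⟨x, hx (fun _ => x) id tendsto_id ?_⟩
  filter_upwards [self_mem_nhdsWithin] with r (hr : 0 < r)
  simpa using hr.le

namespace AddCircle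

variable {T : ℝ} [Fact (0 < T)]

lemma measurePreserving_nsmul {n : ℕ} (hn : n ≠ 0) :
    MeasurePreserving (fun x : AddCircle T => n • x) volume volume := by
  simpa only [natCast_zsmul] using
    Measure.measurePreserving_zsmul (volume : Measure (AddCircle T)) (Int.natCast_ne_zero.mpr hn)

lemma volume_closedBall_div_mul_natCast {n : ℕ} (hn : n ≠ 0) (x : AddCircle T) :
    volume (closedBall x (T / (2 * n))) * n = volume (univ : Set (AddCircle T)) := by
  have hT : 0 < T := Fact.out
  have hn' : (1 : ℝ) ≤ n := Nat.one_le_cast.mpr (Nat.one_le_iff_ne_zero.mpr hn)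
  rw [volume_closedBall, mul_div, mul_div_mul_left T _ two_ne_zero,
    min_eq_right (div_le_self hT.le hn'), AddCircle.measure_univ,
    ← ENNReal.ofReal_natCast, ← ENNReal.ofReal_mul (by positivity), div_mul_cancel₀]
  exact_mod_cast hn

lemma volume_eq_natCast_mul_volume_preimage_nsmul_inter_closedBall {n : ℕ} (hn : n ≠ 0)
    {s : Set (AddCircle T)} (hs : MeasurableSet s) (x : AddCircle T) :
    volume s = n * volume ((fun y => n • y) ⁻¹' s ∩ closedBall x (T / (2 * n))) := by
  set u : AddCircle T := ↑((1 : ℕ) / (n : ℝ) * T)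
  have hu : addOrderOf u = n :=
    addOrderOf_div_of_gcd_eq_one (Nat.pos_of_ne_zero hn) (Nat.gcd_one_left n)
  have hnu : n • u = 0 := hu ▸ addOrderOf_nsmul_eq_zero u
  have hinv : u +ᵥ (fun y => n • y) ⁻¹' s = (fun y => n • y) ⁻¹' s := by
    ext y
    simp [mem_vadd_set_iff_neg_vadd_mem, smul_add, hnu]
  rw [← (measurePreserving_nsmul hn).measure_preimage hs.nullMeasurableSet, ← nsmul_eq_mul]
  have hball : closedBall x (T / (2 * n)) =ᵐ[volume] ball x (T / (2 * addOrderOf u)) :=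
    hu ▸ closedBall_ae_eq_ball
  convert volume_of_add_preimage_eq _ _ u x (addOrderOf_pos_iff.mp (hu ▸ Nat.pos_of_ne_zero hn))
    (.of_eq hinv) hball
  exact hu.symm

lemma volume_rnDeriv_pos_inter_closedBall_div_mul_le {μ : Measure (AddCircle T)}
    [IsFiniteMeasure μ] (hμ : μ ≪ volume) {n : ℕ} (hn : n ≠ 0) (x : AddCircle T) :
    volume ({z | 0 < μ.rnDeriv volume z} ∩ closedBall x (T / (2 * n))) /
        volume (closedBall x (T / (2 * n))) * volume (univ : Set (AddCircle T)) ≤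
      volume {z | 0 < (μ.map (fun y => n • y)).rnDeriv volume z} := by
  set E := {z | 0 < μ.rnDeriv volume z}
  set P := {z | 0 < (μ.map (fun y => n • y)).rnDeriv volume z}
  set I := closedBall x (T / (2 * n))
  have hmp := measurePreserving_nsmul (T := T) hn
  have hac : μ.map (fun y => n • y) ≪ volume := hmp.map_eq ▸ hμ.map hmp.measurable
  have hEP : volume (E \ (fun y => n • y) ⁻¹' P) = 0 :=
    Measure.measure_rnDeriv_pos_diff_preimage_rnDeriv_map_pos hmp.measurable hac
  have hT : 0 < T := Fact.out
  have hI : volume I ≠ 0 := (measure_closedBall_pos _ x (by positivity)).ne'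
  calc volume (E ∩ I) / volume I * volume univ = n * volume (E ∩ I) := by
        rw [← volume_closedBall_div_mul_natCast hn x, ← mul_assoc,
          ENNReal.div_mul_cancel hI (measure_ne_top _ _), mul_comm]
    _ ≤ n * volume ((fun y => n • y) ⁻¹' P ∩ I) := by
        gcongr 1
        refine measure_mono_ae (ae_le_set.mpr (measure_mono_null ?_ hEP))
        exact fun z ⟨⟨hzE, hzI⟩, hz⟩ => ⟨hzE, fun hzP => hz ⟨hzP, hzI⟩⟩
    _ = volume P := (volume_eq_natCast_mul_volume_preimage_nsmul_inter_closedBall hn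
        (measurableSet_lt measurable_const (Measure.measurable_rnDeriv _ _)) x).symm

theorem tendsto_volume_rnDeriv_map_nsmul_pos {μ : Measure (AddCircle T)} [IsFiniteMeasure μ]
    (hμ : μ ≪ volume) (hμ0 : μ ≠ 0) :
    Tendsto (fun n : ℕ => volume {z | 0 < (μ.map (fun y => n • y)).rnDeriv volume z}) atTop
      (𝓝 (volume (univ : Set (AddCircle T)))) := by
  obtain ⟨x, hx⟩ := exists_tendsto_measure_inter_closedBall_div volume
    (Measure.measure_rnDeriv_pos_ne_zero hμ hμ0)
  have hr : Tendsto (fun n : ℕ => T / (2 * n)) atTop (𝓝[>] 0) := by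
    refine tendsto_nhdsWithin_iff.mpr ⟨tendsto_const_nhds.div_atTop
      (tendsto_natCast_atTop_atTop.const_mul_atTop two_pos), ?_⟩
    filter_upwards [eventually_ne_atTop 0] with n hn
    exact div_pos (Fact.out : 0 < T) (by positivity)
  have hlow := ENNReal.Tendsto.mul_const (hx.comp hr)
    (.inr (measure_ne_top volume (univ : Set (AddCircle T))))
  rw [one_mul] at hlow
  refine tendsto_of_tendsto_of_tendsto_of_le_of_le' hlow tendsto_const_nhds ?_
    (.of_forall fun n => measure_mono (subset_univ _))
  filter_upwards [eventually_ne_atTop 0] with n hn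
    using volume_rnDeriv_pos_inter_closedBall_div_mul_le hμ hn x

end AddCircle

theorem stmt_16 (μ : Measure UnitAddCircle) [IsFiniteMeasure μ]
    (hac : μ ≪ volume) (hne : μ ≠ 0) :
    Tendsto (fun p : ℕ =>
        volume {z : UnitAddCircle | 0 < (μ.map (fun x => p • x)).rnDeriv volume z})
      atTop (𝓝 (volume (Set.univ : Set UnitAddCircle))) ∧
    ∀ᶠ p : ℕ in atTop, ¬ (μ.map (fun x => p • x)).MutuallySingular μ := by
  have hlim := AddCircle.tendsto_volume_rnDeriv_map_nsmul_pos hac hne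
  refine ⟨hlim, ?_⟩
  have hgt : volume (univ : Set UnitAddCircle) <
      volume univ + volume {z | 0 < μ.rnDeriv volume z} :=
    ENNReal.lt_add_right (measure_ne_top _ _) (Measure.measure_rnDeriv_pos_ne_zero hac hne)
  filter_upwards [(hlim.add tendsto_const_nhds).eventually (eventually_gt_nhds hgt)]
    with p hp hsing
  exact (Measure.measure_rnDeriv_pos_add_le_of_mutuallySingular hsing).not_gt hp
end
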